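/- arXiv:math/0403109 — 2 statements merged into one kernel-verified Lean document; each statement's English description precedes it below -/
import Mathlib

section
/- If f is a continuous complex-valued integrable function on ℝⁿ, then for every α > 0 and every x ∈ ℝⁿ, the Gauss mean of the inverse Fourier transform of f̂ equals the Weierstrass convolution: ∫_{ℝⁿ} f̂(ξ) exp(2πi x·ξ) G_α(ξ) dξ = (W_α * f)(x). -/
/-!
The multiplication formula `∫ 𝓕 f · g = ∫ f · 𝓕 g`, valid for all integrable `f` and `g`, applied
to the modulated Gauss kernel `g ξ = e^{2πi⟪x, ξ⟫} G_α(ξ)` reduces the claim to `𝓕 g y = W_α(x - y)`,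
which is the classical Fourier transform of a Gaussian.
-/

open Real MeasureTheory

open scoped FourierTransform RealInnerProductSpace

variable {V : Type*} [NormedAddCommGroup V] [InnerProductSpace ℝ V]

noncomputable def gaussKernel (α : ℝ) (ξ : V) : ℝ := rexp (-(4 * π ^ 2 * α * ‖ξ‖ ^ 2))

noncomputable def weierstrassKernel (α : ℝ) (x : V) : ℝ :=
  (4 * π * α) ^ (-(Module.finrank ℝ V : ℝ) / 2) * rexp (-‖x‖ ^ 2 / (4 * α))

lemma fourierChar_inner_smul_gaussKernel (α : ℝ) (x ξ : V) :
    𝐞 ⟪x, ξ⟫ • (gaussKernel α ξ : ℂ) =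
      Complex.exp (-((4 * π ^ 2 * α : ℝ) : ℂ) * ‖ξ‖ ^ 2 + 2 * π * Complex.I * ⟪x, ξ⟫) := by
  rw [Circle.smul_def, Real.fourierChar_apply, gaussKernel, Complex.ofReal_exp, smul_eq_mul,
    ← Complex.exp_add]
  push_cast
  ring_nf

variable [FiniteDimensional ℝ V] [MeasurableSpace V] [BorelSpace V]

lemma integral_fourier_smul_eq_of_integrable {F : Type*} [NormedAddCommGroup F]
    [NormedSpace ℂ F] [CompleteSpace F] {f : V → ℂ} {g : V → F} (hf : Integrable f)
    (hg : Integrable g) :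
    ∫ ξ, 𝓕 f ξ • g ξ = ∫ x, f x • 𝓕 g x := by
  have h := VectorFourier.integral_fourierIntegral_smul_eq_flip (L := innerₗ V)
    Real.continuous_fourierChar continuous_inner hf hg
  rw [flip_innerₗ] at h
  exact h

lemma integrable_fourierChar_inner_smul_gaussKernel {α : ℝ} (hα : 0 < α) (x : V) :
    Integrable fun ξ : V ↦ 𝐞 ⟪x, ξ⟫ • (gaussKernel α ξ : ℂ) := by
  simp only [fourierChar_inner_smul_gaussKernel]
  exact GaussianFourier.integrable_cexp_neg_mul_sq_norm_add
    (by rw [Complex.ofReal_re]; positivity) _ x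

lemma fourier_fourierChar_inner_smul_gaussKernel {α : ℝ} (hα : 0 < α) (x w : V) :
    𝓕 (fun ξ : V ↦ 𝐞 ⟪x, ξ⟫ • (gaussKernel α ξ : ℂ)) w = weierstrassKernel α (x - w) := by
  simp only [fourierChar_inner_smul_gaussKernel]
  rw [fourier_gaussian_innerProductSpace' (by rw [Complex.ofReal_re]; positivity),
    weierstrassKernel]
  have hbase : (π : ℂ) / ((4 * π ^ 2 * α : ℝ) : ℂ) = ((4 * π * α)⁻¹ : ℝ) := by
    push_cast
    field_simp
  have hexp : -(π : ℂ) ^ 2 * ‖x - w‖ ^ 2 / ((4 * π ^ 2 * α : ℝ) : ℂ) =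
      ((-‖x - w‖ ^ 2 / (4 * α) : ℝ) : ℂ) := by
    push_cast
    field_simp
  have hdim : (Module.finrank ℝ V / 2 : ℂ) = ((Module.finrank ℝ V / 2 : ℝ) : ℂ) := by
    push_cast; rfl
  rw [hbase, hexp, hdim, ← Complex.ofReal_cpow (by positivity), ← Complex.ofReal_exp,
    ← Complex.ofReal_mul, Real.inv_rpow (by positivity), ← Real.rpow_neg (by positivity)]
  simp only [neg_div]

theorem gauss_mean_eq_weierstrass_conv_general (n : ℕ)
    (f : EuclideanSpace ℝ (Fin n) → ℂ) (hi : Integrable f)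
    (α : ℝ) (hα : 0 < α) (x : EuclideanSpace ℝ (Fin n)) :
    ∫ ξ : EuclideanSpace ℝ (Fin n),
        (∫ y : EuclideanSpace ℝ (Fin n),
            f y * Complex.exp (-(2 * (Real.pi : ℂ) * Complex.I * ((inner ℝ y ξ : ℝ) : ℂ))))
          * Complex.exp (2 * (Real.pi : ℂ) * Complex.I * ((inner ℝ x ξ : ℝ) : ℂ))
          * (Real.exp (-(4 * Real.pi ^ 2 * α * ‖ξ‖ ^ 2)) : ℝ)
      = ∫ y : EuclideanSpace ℝ (Fin n),
          f y * (((4 * Real.pi * α) ^ (-(n : ℝ) / 2)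
            * Real.exp (-‖x - y‖ ^ 2 / (4 * α)) : ℝ) : ℂ) := by
  have hfourier (ξ : EuclideanSpace ℝ (Fin n)) :
      ∫ y, f y * Complex.exp (-(2 * (π : ℂ) * Complex.I * ⟪y, ξ⟫)) = 𝓕 f ξ := by
    rw [Real.fourier_eq']
    congr 1 with y
    rw [smul_eq_mul, mul_comm]
    push_cast
    ring_nf
  have hmodulated (ξ : EuclideanSpace ℝ (Fin n)) :
      Complex.exp (2 * (π : ℂ) * Complex.I * ⟪x, ξ⟫) *
          (Real.exp (-(4 * π ^ 2 * α * ‖ξ‖ ^ 2)) : ℂ) = 𝐞 ⟪x, ξ⟫ • (gaussKernel α ξ : ℂ) := by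
    rw [Circle.smul_def, Real.fourierChar_apply, gaussKernel, smul_eq_mul, mul_comm]
    push_cast
    ring_nf
  calc _ = ∫ ξ, 𝓕 f ξ • (𝐞 ⟪x, ξ⟫ • (gaussKernel α ξ : ℂ)) := by
        simp_rw [hfourier]
        congr 1 with ξ
        rw [mul_assoc, hmodulated]
        rfl
    _ = ∫ y, f y • 𝓕 (fun ξ ↦ 𝐞 ⟪x, ξ⟫ • (gaussKernel α ξ : ℂ)) y :=
        integral_fourier_smul_eq_of_integrable hi
          (integrable_fourierChar_inner_smul_gaussKernel hα x)
    _ = _ := by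
        simp_rw [fourier_fourierChar_inner_smul_gaussKernel hα, weierstrassKernel,
          finrank_euclideanSpace_fin, smul_eq_mul]

theorem gauss_mean_eq_weierstrass_conv (n : ℕ)
    (f : EuclideanSpace ℝ (Fin n) → ℂ) (hf : Continuous f) (hi : Integrable f)
    (α : ℝ) (hα : 0 < α) (x : EuclideanSpace ℝ (Fin n)) :
    ∫ ξ : EuclideanSpace ℝ (Fin n),
        (∫ y : EuclideanSpace ℝ (Fin n),
            f y * Complex.exp (-(2 * (Real.pi : ℂ) * Complex.I * ((inner ℝ y ξ : ℝ) : ℂ))))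
          * Complex.exp (2 * (Real.pi : ℂ) * Complex.I * ((inner ℝ x ξ : ℝ) : ℂ))
          * (Real.exp (-(4 * Real.pi ^ 2 * α * ‖ξ‖ ^ 2)) : ℝ)
      = ∫ y : EuclideanSpace ℝ (Fin n),
          f y * (((4 * Real.pi * α) ^ (-(n : ℝ) / 2)
            * Real.exp (-‖x - y‖ ^ 2 / (4 * α)) : ℝ) : ℂ) :=
  gauss_mean_eq_weierstrass_conv_general n f hi α hα x
end

section
/- Fourier inversion via Gauss summability: if f is a bounded continuous complex-valued integrable function on ℝⁿ, then for every x ∈ ℝⁿ, lim_{α → 0⁺} ∫_{ℝⁿ} f̂(ξ) exp(2πi x·ξ) G_α(ξ) dξ = f(x). -/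
/-!
The Gauss kernel makes `f̂(ξ) e^{2πi x·ξ} G_α(ξ)` jointly integrable in `(y, ξ)`, so Fubini moves
the Fourier transform from `f` onto the modulated Gaussian `e^{2πi x·ξ} G_α(ξ)`, whose transform is
the heat kernel `(4πα)^{-n/2} e^{-|x-y|²/4α}`. The integral is therefore the heat-kernel average
of `f` around `x`; these kernels form an approximate identity as `α → 0⁺`, so the averages tend
to `f x` at every continuity point.
-/

open Real MeasureTheory Filter Complex Module Topology
open scoped RealInnerProductSpace FourierTransform

section

variable {V E : Type*} [NormedAddCommGroup V] [InnerProductSpace ℝ V]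
  [MeasurableSpace V] [BorelSpace V] [FiniteDimensional ℝ V]
  [NormedAddCommGroup E] [NormedSpace ℂ E] [CompleteSpace E] {f : V → E}

theorem integral_fourier_smul_eq_integral_smul_fourier {g : V → ℂ} (hg : Integrable g)
    (hf : Integrable f) : ∫ w, 𝓕 g w • f w = ∫ w, g w • 𝓕 f w := by
  have fubini := VectorFourier.integral_fourierIntegral_smul_eq_flip (L := innerₗ V)
    Real.continuous_fourierChar continuous_inner hg hf
  rwa [flip_innerₗ] at fubini

theorem integral_gaussian_smul_fourier_eq (hf : Integrable f) {c : ℝ} (hc : 0 < c) (v : V) :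
    ∫ w : V, cexp (-c⁻¹ * ‖w‖ ^ 2 + 2 * π * I * ⟪v, w⟫) • 𝓕 f w =
      ∫ w : V, ((π * c : ℂ) ^ (finrank ℝ V / 2 : ℂ) * cexp (-π ^ 2 * c * ‖v - w‖ ^ 2)) • f w := by
  have hc' : 0 < ((c⁻¹ : ℝ) : ℂ).re := by simpa
  rw [← integral_fourier_smul_eq_integral_smul_fourier
    (GaussianFourier.integrable_cexp_neg_mul_sq_norm_add hc' _ _) hf]
  congr 1 with w
  rw [fourier_gaussian_innerProductSpace' hc', ofReal_inv, div_inv_eq_mul, div_inv_eq_mul, mul_right_comm _ _ (c : ℂ)]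

theorem tendsto_integral_gaussian_smul_fourier (hf : Integrable f) {v : V}
    (hv : ContinuousAt f v) :
    Tendsto (fun c : ℝ ↦ ∫ w : V, cexp (-c⁻¹ * ‖w‖ ^ 2 + 2 * π * I * ⟪v, w⟫) • 𝓕 f w)
      atTop (𝓝 (f v)) := by
  refine (Real.tendsto_integral_gaussian_smul' hf hv).congr' ?_
  filter_upwards [Ioi_mem_atTop 0] with c hc
  exact (integral_gaussian_smul_fourier_eq hf hc v).symm

theorem tendsto_inv_four_pi_sq_mul_nhdsGT_zero :
    Tendsto (fun α : ℝ ↦ (4 * π ^ 2 * α)⁻¹) (𝓝[>] 0) atTop :=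
  (tendsto_inv_nhdsGT_zero.atTop_mul_const (r := (4 * π ^ 2)⁻¹) (by positivity)).congr
    fun α ↦ by ring

theorem tendsto_integral_gaussKernel_smul_fourier (hf : Integrable f) {v : V}
    (hv : ContinuousAt f v) :
    Tendsto (fun α : ℝ ↦ ∫ ξ : V,
        (Real.exp (-(4 * π ^ 2 * α * ‖ξ‖ ^ 2)) * cexp (2 * π * I * ⟪v, ξ⟫)) • 𝓕 f ξ)
      (𝓝[>] 0) (𝓝 (f v)) := by
  refine ((tendsto_integral_gaussian_smul_fourier hf hv).comp
    tendsto_inv_four_pi_sq_mul_nhdsGT_zero).congr fun α ↦ ?_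
  dsimp only [Function.comp_apply]
  congr 1 with ξ
  rw [inv_inv, ofReal_exp, ← Complex.exp_add]
  congr 2
  push_cast
  ring

theorem fourier_eq_integral_mul_cexp (g : V → ℂ) (ξ : V) :
    𝓕 g ξ = ∫ y, g y * cexp (-(2 * π * I * ⟪y, ξ⟫)) := by
  rw [fourier_eq']
  congr 1 with y
  rw [smul_eq_mul, mul_comm]
  congr 2
  push_cast
  ring

end

theorem fourier_inversion_gauss_summability_general (n : ℕ)
    (f : EuclideanSpace ℝ (Fin n) → ℂ) (hf : Continuous f)
    (hi : Integrable f)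
    (x : EuclideanSpace ℝ (Fin n)) :
    Tendsto (fun α : ℝ =>
        ∫ ξ : EuclideanSpace ℝ (Fin n),
          (∫ y : EuclideanSpace ℝ (Fin n),
              f y * Complex.exp (-(2 * (Real.pi : ℂ) * Complex.I * ((inner ℝ y ξ : ℝ) : ℂ))))
            * Complex.exp (2 * (Real.pi : ℂ) * Complex.I * ((inner ℝ x ξ : ℝ) : ℂ))
            * (Real.exp (-(4 * Real.pi ^ 2 * α * ‖ξ‖ ^ 2)) : ℝ))
      (nhdsWithin 0 (Set.Ioi 0)) (nhds (f x)) := by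
  refine (tendsto_integral_gaussKernel_smul_fourier hi hf.continuousAt).congr fun α ↦ ?_
  congr 1 with ξ
  rw [fourier_eq_integral_mul_cexp, smul_eq_mul]
  ring

theorem fourier_inversion_gauss_summability (n : ℕ)
    (f : EuclideanSpace ℝ (Fin n) → ℂ) (hf : Continuous f)
    (hb : ∃ M : ℝ, ∀ x, ‖f x‖ ≤ M) (hi : Integrable f)
    (x : EuclideanSpace ℝ (Fin n)) :
    Tendsto (fun α : ℝ =>
        ∫ ξ : EuclideanSpace ℝ (Fin n),
          (∫ y : EuclideanSpace ℝ (Fin n),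
              f y * Complex.exp (-(2 * (Real.pi : ℂ) * Complex.I * ((inner ℝ y ξ : ℝ) : ℂ))))
            * Complex.exp (2 * (Real.pi : ℂ) * Complex.I * ((inner ℝ x ξ : ℝ) : ℂ))
            * (Real.exp (-(4 * Real.pi ^ 2 * α * ‖ξ‖ ^ 2)) : ℝ))
      (nhdsWithin 0 (Set.Ioi 0)) (nhds (f x)) :=
  fourier_inversion_gauss_summability_general n f hf hi x
end
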